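/- arXiv:2108.11285 — 2 statements merged into one kernel-verified Lean document; each statement's English description precedes it below -/
import Mathlib

section
/- For every natural number n, the number of derangements of {1,…,n} equals the improper integral ∫_0^∞ (x-1)^n e^{-x} dx; that is, D_n = ∫_0^∞ (x-1)^n e^{-x} dx, where the integral is over the real interval (0,∞). -/
open MeasureTheory Filter Polynomial Set Topology

/-
Both sides satisfy `a 0 = 1` and `a (n + 1) = (n + 1) * a n + (-1) ^ (n + 1)`. For derangements this
is the classical recurrence; for `I n = ∫_0^∞ (x-1)^n e^{-x} dx` it comes from integrating the
derivative of `-(x-1)^(n+1) e^{-x}` over `(0, ∞)`: the boundary term at `0` is `(-1)^(n+1)`.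
-/

lemma integrableOn_pow_mul_exp_neg_Ioi (k : ℕ) :
    IntegrableOn (fun x : ℝ => x ^ k * Real.exp (-x)) (Ioi 0) := by
  refine (Real.GammaIntegral_convergent (s := k + 1) (by positivity)).congr_fun
    (fun x _ => ?_) measurableSet_Ioi
  simp only [add_sub_cancel_right, Real.rpow_natCast, mul_comm]

lemma Polynomial.integrableOn_eval_mul_exp_neg_Ioi (p : ℝ[X]) :
    IntegrableOn (fun x : ℝ => p.eval x * Real.exp (-x)) (Ioi 0) := by
  induction p using Polynomial.induction_on' with
  | add p q hp hq =>
    simp only [eval_add, add_mul]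
    exact hp.add hq
  | monomial k a =>
    simp only [eval_monomial, mul_assoc]
    exact (integrableOn_pow_mul_exp_neg_Ioi k).const_mul a

lemma integrableOn_sub_one_pow_mul_exp_neg_Ioi (n : ℕ) :
    IntegrableOn (fun x : ℝ => (x - 1) ^ n * Real.exp (-x)) (Ioi 0) := by
  convert ((X - C 1 : ℝ[X]) ^ n).integrableOn_eval_mul_exp_neg_Ioi using 3
  simp

lemma tendsto_sub_one_pow_mul_exp_neg_atTop (n : ℕ) :
    Tendsto (fun x : ℝ => (x - 1) ^ n * Real.exp (-x)) atTop (𝓝 0) := by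
  have h := ((Real.tendsto_pow_mul_exp_neg_atTop_nhds_zero n).comp
    (tendsto_atTop_add_const_right _ (-1) tendsto_id)).const_mul (Real.exp (-1))
  rw [mul_zero] at h
  refine h.congr fun x => ?_
  simp only [Function.comp_apply, id, ← sub_eq_add_neg]
  rw [mul_left_comm, ← Real.exp_add]
  congr 2
  ring

lemma integral_sub_one_pow_succ_mul_exp_neg_Ioi (n : ℕ) :
    ∫ x in Ioi (0 : ℝ), (x - 1) ^ (n + 1) * Real.exp (-x) =
      (n + 1) * (∫ x in Ioi (0 : ℝ), (x - 1) ^ n * Real.exp (-x)) + (-1) ^ (n + 1) := by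
  have hderiv : ∀ x ∈ Ici (0 : ℝ), HasDerivAt (fun x => -((x - 1) ^ (n + 1) * Real.exp (-x)))
      ((x - 1) ^ (n + 1) * Real.exp (-x) - (n + 1) * ((x - 1) ^ n * Real.exp (-x))) x := by
    intro x _
    have hpow : HasDerivAt (fun x : ℝ => (x - 1) ^ (n + 1)) ((n + 1) * (x - 1) ^ n) x := by
      simpa using ((hasDerivAt_id x).sub_const 1).fun_pow (n + 1)
    have hexp : HasDerivAt (fun x : ℝ => Real.exp (-x)) (-Real.exp (-x)) x := by
      simpa using (hasDerivAt_neg x).exp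
    exact (hpow.fun_mul hexp).fun_neg.congr_deriv (by ring)
  have hint := integrableOn_sub_one_pow_mul_exp_neg_Ioi (n + 1)
  have hint' := (integrableOn_sub_one_pow_mul_exp_neg_Ioi n).const_mul ((n : ℝ) + 1)
  have hftc := integral_Ioi_of_hasDerivAt_of_tendsto' hderiv (hint.sub hint')
    (tendsto_sub_one_pow_mul_exp_neg_atTop (n + 1)).neg
  rw [integral_sub hint hint', integral_const_mul] at hftc
  simp only [neg_zero, zero_sub, Real.exp_zero, mul_one, neg_neg] at hftc
  linear_combination hftc

lemma numDerangements_eq_integral_sub_one_pow_mul_exp_neg_Ioi (n : ℕ) :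
    (numDerangements n : ℝ) = ∫ x in Ioi (0 : ℝ), (x - 1) ^ n * Real.exp (-x) := by
  induction n with
  | zero => simp only [numDerangements_zero, Nat.cast_one, pow_zero, one_mul,
      integral_exp_neg_Ioi_zero]
  | succ n ih =>
    have hrec : (numDerangements (n + 1) : ℝ) = (n + 1) * numDerangements n - (-1) ^ n := by
      exact_mod_cast numDerangements_succ n
    rw [hrec, ih, integral_sub_one_pow_succ_mul_exp_neg_Ioi]
    ring

/-- The number of derangements of `{1,…,n}` equals the improper integral
`∫_0^∞ (x-1)^n e^{-x} dx`. -/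
theorem derangements_eq_integral (n : ℕ) :
    ((Fintype.card {π : Equiv.Perm (Fin n) // ∀ i, π i ≠ i}) : ℝ) =
      ∫ x in Set.Ioi (0 : ℝ), (x - 1) ^ n * Real.exp (-x) := by
  rw [← numDerangements_eq_integral_sub_one_pow_mul_exp_neg_Ioi,
    ← card_derangements_fin_eq_numDerangements]
  exact congrArg _ (Fintype.card_congr (Equiv.refl _))
end

section
/- The number of reduced Latin triangles of side length 4 is exactly 0; that is, no reduced Latin triangle of side length 4 exists. -/
/-- The index set of a Latin triangle of side length `n`:
pairs `(i,j)` of positive integers with `i + j ≤ n + 1`. -/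
def TriIdx (n : ℕ) : Type :=
  {p : ℕ × ℕ // 1 ≤ p.1 ∧ 1 ≤ p.2 ∧ p.1 + p.2 ≤ n + 1}

/-- `M` is a Latin triangle of side length `n`: it assigns to each pair `(i,j)`
of positive integers with `i + j ≤ n + 1` a value in `{1,…,n}`, taking distinct
values on each row (same `i`), each left diagonal (same `j`), and each right
diagonal (same `i + j`). -/
def IsLatinTriangle (n : ℕ) (M : TriIdx n → ℕ) : Prop :=
  (∀ p : TriIdx n, 1 ≤ M p ∧ M p ≤ n) ∧
  (∀ p q : TriIdx n, p.val.1 = q.val.1 → p ≠ q → M p ≠ M q) ∧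
  (∀ p q : TriIdx n, p.val.2 = q.val.2 → p ≠ q → M p ≠ M q) ∧
  (∀ p q : TriIdx n, p.val.1 + p.val.2 = q.val.1 + q.val.2 → p ≠ q → M p ≠ M q)

/-- A Latin triangle is reduced if its bottom row is the identity:
`M (1, j) = j` for all `j`. -/
def IsReducedLatinTriangle (n : ℕ) (M : TriIdx n → ℕ) : Prop :=
  ∀ p : TriIdx n, p.val.1 = 1 → M p = p.val.2

/-- The number of reduced Latin triangles of side length 4 is exactly 0. -/
theorem reduced_latin_triangles_side_4 :
    Set.ncard {M : TriIdx 4 → ℕ |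
      IsLatinTriangle 4 M ∧ IsReducedLatinTriangle 4 M} = 0 := by
  have hempty : {M : TriIdx 4 → ℕ |
      IsLatinTriangle 4 M ∧ IsReducedLatinTriangle 4 M} = ∅ := by
    ext M
    simp only [Set.mem_setOf_eq, Set.mem_empty_iff_false, iff_false]
    rintro ⟨⟨hbd, hrow, hcol, hdiag⟩, hred⟩
    -- the ten cells
    let p11 : TriIdx 4 := ⟨(1,1), by omega⟩
    let p12 : TriIdx 4 := ⟨(1,2), by omega⟩
    let p13 : TriIdx 4 := ⟨(1,3), by omega⟩
    let p14 : TriIdx 4 := ⟨(1,4), by omega⟩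
    let p21 : TriIdx 4 := ⟨(2,1), by omega⟩
    let p22 : TriIdx 4 := ⟨(2,2), by omega⟩
    let p23 : TriIdx 4 := ⟨(2,3), by omega⟩
    let p31 : TriIdx 4 := ⟨(3,1), by omega⟩
    let p32 : TriIdx 4 := ⟨(3,2), by omega⟩
    let p41 : TriIdx 4 := ⟨(4,1), by omega⟩
    have h11 : M p11 = 1 := hred p11 rfl
    have h12 : M p12 = 2 := hred p12 rfl
    have h13 : M p13 = 3 := hred p13 rfl
    have h14 : M p14 = 4 := hred p14 rfl
    have ne : ∀ a b : ℕ × ℕ, a ≠ b →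
        ∀ (ha : 1 ≤ a.1 ∧ 1 ≤ a.2 ∧ a.1 + a.2 ≤ 5)
          (hb : 1 ≤ b.1 ∧ 1 ≤ b.2 ∧ b.1 + b.2 ≤ 5),
        (⟨a, ha⟩ : TriIdx 4) ≠ ⟨b, hb⟩ := by
      intro a b hab ha hb h
      exact hab (congrArg Subtype.val h)
    -- bounds
    have b21 := hbd p21; have b22 := hbd p22; have b23 := hbd p23
    have b31 := hbd p31; have b32 := hbd p32; have b41 := hbd p41
    -- rows
    have r1 := hrow p21 p22 rfl (ne _ _ (by decide) _ _)
    have r2 := hrow p21 p23 rfl (ne _ _ (by decide) _ _)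
    have r3 := hrow p22 p23 rfl (ne _ _ (by decide) _ _)
    have r4 := hrow p31 p32 rfl (ne _ _ (by decide) _ _)
    -- columns
    have c1 := hcol p11 p21 rfl (ne _ _ (by decide) _ _)
    have c2 := hcol p11 p31 rfl (ne _ _ (by decide) _ _)
    have c3 := hcol p11 p41 rfl (ne _ _ (by decide) _ _)
    have c4 := hcol p21 p31 rfl (ne _ _ (by decide) _ _)
    have c5 := hcol p21 p41 rfl (ne _ _ (by decide) _ _)
    have c6 := hcol p31 p41 rfl (ne _ _ (by decide) _ _)
    have c7 := hcol p12 p22 rfl (ne _ _ (by decide) _ _)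
    have c8 := hcol p12 p32 rfl (ne _ _ (by decide) _ _)
    have c9 := hcol p22 p32 rfl (ne _ _ (by decide) _ _)
    have c10 := hcol p13 p23 rfl (ne _ _ (by decide) _ _)
    -- diagonals
    have d1 := hdiag p12 p21 rfl (ne _ _ (by decide) _ _)
    have d2 := hdiag p13 p22 rfl (ne _ _ (by decide) _ _)
    have d3 := hdiag p13 p31 rfl (ne _ _ (by decide) _ _)
    have d4 := hdiag p22 p31 rfl (ne _ _ (by decide) _ _)
    have d5 := hdiag p14 p23 rfl (ne _ _ (by decide) _ _)
    have d6 := hdiag p14 p32 rfl (ne _ _ (by decide) _ _)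
    have d7 := hdiag p14 p41 rfl (ne _ _ (by decide) _ _)
    have d8 := hdiag p23 p32 rfl (ne _ _ (by decide) _ _)
    have d9 := hdiag p23 p41 rfl (ne _ _ (by decide) _ _)
    have d10 := hdiag p32 p41 rfl (ne _ _ (by decide) _ _)
    omega
  rw [hempty, Set.ncard_empty]
end
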